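/- Let τ = (1 + √5)/2. There exists t₀ ∈ (0.694, 0.695) such that 5t₀⁶ − 80t₀⁵ + 190t₀³ − 4t₀² − 84t₀ + 9 = 0, and such that at δ = arctan(√t₀) the two functions f_I(δ) = −4 sin²(2δ)/((cos 2δ − (4 + √5))·(cos 2δ − (1 − 2√5)τ³)) and h(δ) = 4 cos²(2δ)/(3 + cos²(2δ)) take the same value, which lies in the interval (0.0429, 0.04293). -/

import Mathlib

/-!
Put `c = cos 2δ`. Since `sin² 2δ = 1 - c²` and `τ³ = 2 + √5`, both `f_I` and `h` are rational
functions of `c`, and `f_I = h` clears to the cubic `(4 + 2√5)c³ - (49 + 20√5)c² + 3 = 0`, which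
changes sign on `(0.18035, 0.1804)`. For `δ = arctan √t` one has `c = (1 - t)/(1 + t)`, and the
product of the cubic with its conjugate under `√5 ↦ -√5`, rewritten in `t`, is `16 (1 + t)⁻⁶`
times the sextic.
-/

noncomputable section

open Real

/-- The golden ratio `τ = (1 + √5)/2`. -/
def τ : ℝ := (1 + Real.sqrt 5) / 2

/-- The squared distance between two neighboring tangent lines in the δ-rotation
process for the icosahedron/dodecahedron pair. -/
def fI (δ : ℝ) : ℝ :=
  -4 * Real.sin (2 * δ) ^ 2 /
    ((Real.cos (2 * δ) - (4 + Real.sqrt 5)) *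
      (Real.cos (2 * δ) - (1 - 2 * Real.sqrt 5) * τ ^ 3))

/-- The squared distance between the tangent lines of the orbit marked 3. -/
def h (δ : ℝ) : ℝ := 4 * Real.cos (2 * δ) ^ 2 / (3 + Real.cos (2 * δ) ^ 2)

lemma tau_pow_three : τ ^ 3 = 2 + √5 := by
  have hsq : τ ^ 2 = τ + 1 := goldenRatio_sq
  calc τ ^ 3 = 2 * τ + 1 := by linear_combination (τ + 1) * hsq
    _ = 2 + √5 := by rw [τ]; ring

lemma cos_two_mul_arctan (x : ℝ) : cos (2 * arctan x) = (1 - x ^ 2) / (1 + x ^ 2) := by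
  have hx : 1 + x ^ 2 ≠ 0 := by positivity
  rw [cos_two_mul, cos_sq_arctan]
  field_simp
  ring

lemma fI_eq (δ : ℝ) :
    fI δ = -4 * (1 - cos (2 * δ) ^ 2) /
      ((cos (2 * δ) - (4 + √5)) * (cos (2 * δ) + (8 + 3 * √5))) := by
  rw [fI, sin_sq, tau_pow_three]
  congr 2
  have h5 : √5 ^ 2 = 5 := sq_sqrt (by norm_num)
  linear_combination (2 : ℝ) * h5

def crossingCubic (c : ℝ) : ℝ := (4 + 2 * √5) * c ^ 3 - (49 + 20 * √5) * c ^ 2 + 3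

lemma fI_eq_h_iff (δ : ℝ) : fI δ = h δ ↔ crossingCubic (cos (2 * δ)) = 0 := by
  rw [fI_eq, h, crossingCubic]
  set c := cos (2 * δ)
  have h5 : √5 ^ 2 = 5 := sq_sqrt (by norm_num)
  have h5nn : 0 ≤ √5 := sqrt_nonneg 5
  have hden : (c - (4 + √5)) * (c + (8 + 3 * √5)) ≠ 0 :=
    (mul_neg_of_neg_of_pos (by linarith [cos_le_one (2 * δ)])
      (by linarith [neg_one_le_cos (2 * δ)])).ne
  rw [div_eq_div_iff hden (by positivity)]
  constructor <;> intro H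
  · linear_combination (-1 / 4 : ℝ) * H + 3 * c ^ 2 * h5
  · linear_combination (-4 : ℝ) * H + 12 * c ^ 2 * h5

lemma sextic_eq_zero_of_crossingCubic {t : ℝ} (ht : 1 + t ≠ 0)
    (hcub : crossingCubic ((1 - t) / (1 + t)) = 0) :
    5 * t ^ 6 - 80 * t ^ 5 + 190 * t ^ 3 - 4 * t ^ 2 - 84 * t + 9 = 0 := by
  generalize hc : (1 - t) / (1 + t) = c at hcub
  have h5 : √5 ^ 2 = 5 := sq_sqrt (by norm_num)
  have hnorm : (4 * c ^ 3 - 49 * c ^ 2 + 3) ^ 2 - 5 * (2 * c ^ 3 - 20 * c ^ 2) ^ 2 = 0 := by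
    rw [crossingCubic] at hcub
    linear_combination ((4 * c ^ 3 - 49 * c ^ 2 + 3) - √5 * (2 * c ^ 3 - 20 * c ^ 2)) * hcub
      + (2 * c ^ 3 - 20 * c ^ 2) ^ 2 * h5
  rw [← hc] at hnorm
  field_simp at hnorm
  linear_combination hnorm / 16

lemma sqrt_five_mem : √5 ∈ Set.Ioo (2.236 : ℝ) 2.2361 :=
  ⟨(lt_sqrt (by norm_num)).2 (by norm_num), (sqrt_lt' (by norm_num)).2 (by norm_num)⟩

lemma exists_crossingCubic_root : ∃ c ∈ Set.Ioo (0.18035 : ℝ) 0.1804, crossingCubic c = 0 := by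
  obtain ⟨h5l, h5u⟩ := sqrt_five_mem
  have hcont : ContinuousOn crossingCubic (Set.Icc 0.18035 0.1804) := by
    unfold crossingCubic; fun_prop
  refine intermediate_value_Ioo' (by norm_num) hcont ⟨?_, ?_⟩ <;>
    norm_num [crossingCubic] <;> linarith

lemma h_mem_Ioo_of_cos_mem {δ : ℝ} (hδ : cos (2 * δ) ∈ Set.Ioo (0.18035 : ℝ) 0.1804) :
    h δ ∈ Set.Ioo (0.0429 : ℝ) 0.04293 := by
  obtain ⟨hc₁, hc₂⟩ := hδ
  rw [h]
  constructor
  · rw [lt_div_iff₀ (by positivity)]; nlinarith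
  · rw [div_lt_iff₀ (by positivity)]; nlinarith

theorem stmt16 :
    ∃ t₀ ∈ Set.Ioo (0.694 : ℝ) 0.695,
      5 * t₀ ^ 6 - 80 * t₀ ^ 5 + 190 * t₀ ^ 3 - 4 * t₀ ^ 2 - 84 * t₀ + 9 = 0 ∧
      fI (Real.arctan (Real.sqrt t₀)) = h (Real.arctan (Real.sqrt t₀)) ∧
      fI (Real.arctan (Real.sqrt t₀)) ∈ Set.Ioo (0.0429 : ℝ) 0.04293 := by
  obtain ⟨c, hc, hroot⟩ := exists_crossingCubic_root
  have hc_pos : 0 < 1 + c := by linarith [hc.1]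
  set t := (1 - c) / (1 + c)
  have ht : t ∈ Set.Ioo (0.694 : ℝ) 0.695 :=
    ⟨(lt_div_iff₀ hc_pos).2 (by linarith [hc.2]), (div_lt_iff₀ hc_pos).2 (by linarith [hc.1])⟩
  have hinv : (1 - t) / (1 + t) = c := by simp only [t]; field_simp; ring
  have hcos : cos (2 * arctan √t) = c := by
    rw [cos_two_mul_arctan, sq_sqrt (by linarith [ht.1]), hinv]
  have hcross : fI (arctan √t) = h (arctan √t) := (fI_eq_h_iff _).2 (hcos ▸ hroot)
  refine ⟨t, ht, sextic_eq_zero_of_crossingCubic (by linarith [ht.1]) (hinv ▸ hroot), hcross, ?_⟩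
  exact hcross ▸ h_mem_Ioo_of_cos_mem (hcos ▸ hc)
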